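/- arXiv:1509.07373 — 2 statements merged into one kernel-verified Lean document; each statement's English description precedes it below -/
import Mathlib

section
/- Under hypotheses (Hγ) and (Hη) and the stated choice of L: for every m ∈ ℤ^ν ∖ {0}, if n ∈ R_m then |n| ≤ |m|. In particular, each set R_m is finite. -/
open scoped Real BigOperators
open Real

noncomputable section

/-- `|m| = ∑_i |m_i|` (ℓ¹ norm on `ℤ^ν`, as a real number). -/
def znorm {ν : ℕ} (m : Fin ν → ℤ) : ℝ := ∑ i, |(m i : ℝ)|

/-- Distance between the gaps labelled `m` and `n`
(equals `dist ([Em m, Ep m], [Em n, Ep n])` when these closed intervals are disjoint). -/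
def gapDist {ν : ℕ} (Em Ep : (Fin ν → ℤ) → ℝ) (m n : Fin ν → ℤ) : ℝ :=
  max (Em n - Ep m) (Em m - Ep n)

/-- Gap length `γ_m = E_m^+ - E_m^-`. -/
def gapLen {ν : ℕ} (Em Ep : (Fin ν → ℤ) → ℝ) (m : Fin ν → ℤ) : ℝ := Ep m - Em m

/-- The exceptional set `R_m = { n ∈ ℤ^ν ∖ {0} : n ≠ m, γ_n > L η_{n,m}⁴ }`. -/
def Rset {ν : ℕ} (Em Ep : (Fin ν → ℤ) → ℝ) (L : ℝ) (m : Fin ν → ℤ) : Set (Fin ν → ℤ) :=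
  {n | n ≠ 0 ∧ n ≠ m ∧ L * gapDist Em Ep n m ^ 4 < gapLen Em Ep n}

/-- `C_m = (η_{m,0} + γ_m)^{1/2} ∏_{n ≠ m} (1 + γ_n/η_{m,n})^{1/2}`, the product running over
all nonzero labels `n ≠ m`. -/
def Cm {ν : ℕ} (Em Ep : (Fin ν → ℤ) → ℝ) (E0 : ℝ) (m : Fin ν → ℤ) : ℝ :=
  Real.sqrt ((Em m - E0) + gapLen Em Ep m) *
    ∏' n : {n : Fin ν → ℤ // n ≠ 0 ∧ n ≠ m},
      Real.sqrt (1 + gapLen Em Ep n / gapDist Em Ep m n)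

/-- Every `n ∈ R_m` satisfies `|n| ≤ |m|`; in particular each `R_m` is finite. -/
theorem Rset_norm_le_and_finite
    {ν : ℕ} (hν : 0 < ν) (ε κ₀ a b c E0 L : ℝ)
    (hε : 0 < ε) (hκ₀ : 0 < κ₀) (hκ₁ : κ₀ ≤ 1) (ha : 0 < a) (hb : 0 < b) (hc : 0 < c)
    (Em Ep : (Fin ν → ℤ) → ℝ)
    (hlt : ∀ m : Fin ν → ℤ, m ≠ 0 → Em m < Ep m)
    (hE0 : ∀ m : Fin ν → ℤ, m ≠ 0 → E0 < Em m)
    (hdisj : ∀ m n : Fin ν → ℤ, m ≠ 0 → n ≠ 0 → m ≠ n → Ep m < Em n ∨ Ep n < Em m)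
    (Hγ : ∀ m : Fin ν → ℤ, m ≠ 0 →
      gapLen Em Ep m < 2 * ε * Real.exp (-(κ₀ * znorm m) / 2))
    (Hη : ∀ m n : Fin ν → ℤ, m ≠ 0 → n ≠ 0 → m ≠ n → znorm n ≤ znorm m →
      a * znorm m ^ (-b) ≤ gapDist Em Ep m n)
    (Hη0low : ∀ m : Fin ν → ℤ, m ≠ 0 → a * znorm m ^ (-b) ≤ Em m - E0)
    (Hη0 : ∀ m : Fin ν → ℤ, m ≠ 0 → Em m - E0 ≤ c * znorm m ^ (2 : ℕ))
    (hL : 0 < L)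
    (hLbig : ∀ m : Fin ν → ℤ, m ≠ 0 →
      2 * ε * Real.exp (-(κ₀ * znorm m) / 2) < L * a ^ 4 * znorm m ^ (-(4 * b)))
    :
    ∀ m : Fin ν → ℤ, m ≠ 0 →
      (∀ n ∈ Rset Em Ep L m, znorm n ≤ znorm m) ∧ (Rset Em Ep L m).Finite := by
  intro m hm
  have znorm_pos : ∀ n : Fin ν → ℤ, n ≠ 0 → 0 < znorm n := by
    intro n hn
    obtain ⟨i, hi⟩ := Function.ne_iff.mp hn
    have h1 : (1 : ℝ) ≤ |(n i : ℝ)| := by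
      have : (1 : ℤ) ≤ |n i| := Int.one_le_abs hi
      calc (1:ℝ) = ((1:ℤ):ℝ) := by norm_num
        _ ≤ ((|n i| : ℤ) : ℝ) := by exact_mod_cast this
        _ = |(n i : ℝ)| := by push_cast; ring
    have h2 : |(n i : ℝ)| ≤ znorm n :=
      Finset.single_le_sum (f := fun j => |(n j : ℝ)|) (fun j _ => abs_nonneg _) (Finset.mem_univ i)
    linarith
  have hM : ∀ n ∈ Rset Em Ep L m, znorm n ≤ znorm m := by
    intro n hn
    obtain ⟨hn0, hnm, hlt'⟩ := hn
    by_contra hle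
    push_neg at hle
    have hmn : znorm m ≤ znorm n := le_of_lt hle
    have hη := Hη n m hn0 hm hnm hmn
    have hpos : 0 < znorm n := znorm_pos n hn0
    have hxpos : (0:ℝ) < a * znorm n ^ (-b) := by positivity
    have h1 : L * (a * znorm n ^ (-b)) ^ 4 ≤ L * gapDist Em Ep n m ^ 4 :=
      mul_le_mul_of_nonneg_left (pow_le_pow_left₀ hxpos.le hη 4) hL.le
    have h2 : L * a ^ 4 * znorm n ^ (-(4 * b)) = L * (a * znorm n ^ (-b)) ^ 4 := by
      rw [mul_pow, ← Real.rpow_natCast (znorm n ^ (-b)) 4, ← Real.rpow_mul hpos.le]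
      norm_num
      ring_nf
    have h3 := (Hγ n hn0).trans (hLbig n hn0)
    rw [h2] at h3
    linarith
  refine ⟨hM, ?_⟩
  have hsub : Rset Em Ep L m ⊆
      Set.Icc (fun _ => -⌈znorm m⌉) (fun _ => ⌈znorm m⌉) := by
    intro n hn
    have h := hM n hn
    have hcoord : ∀ i, |(n i : ℝ)| ≤ znorm m := fun i =>
      le_trans (Finset.single_le_sum (f := fun j => |(n j : ℝ)|) (fun j _ => abs_nonneg _) (Finset.mem_univ i)) h
    constructor <;> intro i
    · have := (abs_le.mp (hcoord i)).1
      have hc : znorm m ≤ (⌈znorm m⌉ : ℝ) := Int.le_ceil _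
      have : (-(⌈znorm m⌉:ℤ) : ℝ) ≤ (n i : ℝ) := by push_cast; linarith
      exact_mod_cast this
    · have := (abs_le.mp (hcoord i)).2
      have hc : znorm m ≤ (⌈znorm m⌉ : ℝ) := Int.le_ceil _
      have : (n i : ℝ) ≤ ((⌈znorm m⌉:ℤ) : ℝ) := by push_cast; linarith
      exact_mod_cast this
  exact (Set.finite_Icc _ _).subset hsub
end
end

section
/- There exist constants τ > 0 and β > 0, depending only on ε, κ₀, a, b, and L, such that for every m ∈ ℤ^ν ∖ {0} and all pairwise distinct s, t, u ∈ R_m with |s| ≥ |t| ≥ |u|, one has |s| ≥ τ exp(β |u|). -/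
open scoped Real BigOperators
open Real

noncomputable section

/-!
Every `n ∈ R_m` has `|n| < |m|`: otherwise `(Hη)` gives `L η_{n,m}⁴ ≥ L a⁴ |n|^{-4b} > γ_n` by the
choice of `L`. Hence `η_{n,m} < D e^{-κ₀|n|/8}` with `D = (2ε/L)^{1/4}`, and
`γ_m < 2ε e^{-κ₀|m|/2} ≤ 2ε e^{-κ₀|n|/2}`.
For distinct `s, t ∈ R_m` with `|t| ≤ |s|`, the triangle inequality through the gap `m` then gives
`a |s|^{-b} ≤ η_{s,t} ≤ η_{s,m} + γ_m + η_{t,m} ≤ (2D + 2ε) e^{-κ₀|t|/8}`,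
i.e. `|s| ≥ τ e^{β|t|} ≥ τ e^{β|u|}` with `τ = (a/(2D+2ε))^{1/b}` and `β = κ₀/(8b)`.
-/

section

variable {ν : ℕ}

theorem znorm_nonneg (n : Fin ν → ℤ) : 0 ≤ znorm n :=
  Finset.sum_nonneg fun _ _ => abs_nonneg _

theorem znorm_pos {n : Fin ν → ℤ} (hn : n ≠ 0) : 0 < znorm n := by
  obtain ⟨i, hi⟩ := Function.ne_iff.mp hn
  have hi' : 0 < |(n i : ℝ)| := abs_pos.mpr (by exact_mod_cast hi)
  exact hi'.trans_le <| Finset.single_le_sum (f := fun j => |(n j : ℝ)|)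
    (fun j _ => abs_nonneg _) (Finset.mem_univ i)

variable (Em Ep : (Fin ν → ℤ) → ℝ)

theorem gapDist_comm (m n : Fin ν → ℤ) : gapDist Em Ep m n = gapDist Em Ep n m :=
  max_comm _ _

theorem gapDist_le_add_gapLen_add (s m t : Fin ν → ℤ) :
    gapDist Em Ep s t ≤ gapDist Em Ep s m + gapLen Em Ep m + gapDist Em Ep m t := by
  unfold gapDist gapLen
  apply max_le
  · linarith [le_max_left (Em m - Ep s) (Em s - Ep m), le_max_left (Em t - Ep m) (Em m - Ep t)]
  · linarith [le_max_right (Em m - Ep s) (Em s - Ep m), le_max_right (Em t - Ep m) (Em m - Ep t)]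

variable {Em Ep} {L : ℝ} {m n : Fin ν → ℤ}

theorem znorm_lt_of_mem_Rset {a b : ℝ} (ha : 0 ≤ a) (hL : 0 ≤ L)
    (hγ : gapLen Em Ep n < L * a ^ 4 * znorm n ^ (-(4 * b)))
    (hη : znorm m ≤ znorm n → a * znorm n ^ (-b) ≤ gapDist Em Ep n m)
    (hn : n ∈ Rset Em Ep L m) : znorm n < znorm m := by
  by_contra! hmn
  have hpow : (a * znorm n ^ (-b)) ^ 4 = a ^ 4 * znorm n ^ (-(4 * b)) := by
    rw [mul_pow, ← Real.rpow_mul_natCast (znorm_nonneg n)]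
    ring_nf
  have h4 : (a * znorm n ^ (-b)) ^ 4 ≤ gapDist Em Ep n m ^ 4 :=
    pow_le_pow_left₀ (mul_nonneg ha (Real.rpow_nonneg (znorm_nonneg n) _)) (hη hmn) 4
  rw [hpow] at h4
  nlinarith [hn.2.2]

theorem gapDist_lt_of_mem_Rset {ε κ₀ : ℝ} (hε : 0 ≤ ε) (hL : 0 < L)
    (hγ : gapLen Em Ep n < 2 * ε * exp (-(κ₀ * znorm n) / 2)) (hn : n ∈ Rset Em Ep L m) :
    gapDist Em Ep n m < (2 * ε / L) ^ (4⁻¹ : ℝ) * exp (-(κ₀ * znorm n) / 8) := by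
  set r := (2 * ε / L) ^ (4⁻¹ : ℝ) * exp (-(κ₀ * znorm n) / 8)
  have hr4 : L * r ^ 4 = 2 * ε * exp (-(κ₀ * znorm n) / 2) := by
    have hroot : ((2 * ε / L) ^ ((4 : ℕ) : ℝ)⁻¹) ^ 4 = 2 * ε / L :=
      Real.rpow_inv_natCast_pow (by positivity) (by norm_num)
    rw [mul_pow, ← Real.exp_nat_mul]
    norm_num at hroot ⊢
    rw [hroot]
    field_simp
    ring_nf
  refine lt_of_pow_lt_pow_left₀ 4 (by positivity) ?_
  nlinarith [hn.2.2]

end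

theorem le_of_mul_rpow_neg_le_mul_exp {a b K x z : ℝ} (ha : 0 < a) (hb : 0 < b) (hK : 0 < K)
    (hx : 0 < x) (h : a * x ^ (-b) ≤ K * exp (-z)) : (a / K) ^ b⁻¹ * exp (z / b) ≤ x := by
  have hxb : 0 < x ^ b := Real.rpow_pos_of_pos hx b
  have h' : a / K * exp z ≤ x ^ b := by
    rw [Real.rpow_neg hx.le, ← div_eq_mul_inv, div_le_iff₀ hxb] at h
    rw [div_mul_eq_mul_div, div_le_iff₀ hK]
    calc a * exp z ≤ K * exp (-z) * x ^ b * exp z := by gcongr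
      _ = x ^ b * K := by rw [Real.exp_neg]; field_simp
  rw [div_eq_mul_inv z b, Real.exp_mul, ← Real.mul_rpow (by positivity) (by positivity)]
  exact (Real.rpow_inv_le_iff_of_pos (by positivity) hx.le hb).mpr h'

theorem mul_rpow_neg_le_of_mem_Rset {ν : ℕ} {ε κ₀ a b L : ℝ} {Em Ep : (Fin ν → ℤ) → ℝ}
    (hε : 0 ≤ ε) (hκ₀ : 0 ≤ κ₀) (ha : 0 ≤ a) (hL : 0 < L)
    (Hγ : ∀ m : Fin ν → ℤ, m ≠ 0 → gapLen Em Ep m < 2 * ε * exp (-(κ₀ * znorm m) / 2))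
    (Hη : ∀ m n : Fin ν → ℤ, m ≠ 0 → n ≠ 0 → m ≠ n → znorm n ≤ znorm m →
      a * znorm m ^ (-b) ≤ gapDist Em Ep m n)
    (hLbig : ∀ m : Fin ν → ℤ, m ≠ 0 →
      2 * ε * exp (-(κ₀ * znorm m) / 2) < L * a ^ 4 * znorm m ^ (-(4 * b)))
    {m s t : Fin ν → ℤ} (hm : m ≠ 0) (hs : s ∈ Rset Em Ep L m) (ht : t ∈ Rset Em Ep L m)
    (hst : s ≠ t) (hts : znorm t ≤ znorm s) :
    a * znorm s ^ (-b) ≤ (2 * (2 * ε / L) ^ (4⁻¹ : ℝ) + 2 * ε) * exp (-(κ₀ * znorm t) / 8) := by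
  set D := (2 * ε / L) ^ (4⁻¹ : ℝ)
  set w := exp (-(κ₀ * znorm t) / 8)
  have htm : znorm t < znorm m := znorm_lt_of_mem_Rset ha hL.le
    ((Hγ t ht.1).trans (hLbig t ht.1)) (Hη t m ht.1 hm ht.2.1) ht
  have hsm : gapDist Em Ep s m ≤ D * w := by
    refine (gapDist_lt_of_mem_Rset hε hL (Hγ s hs.1) hs).le.trans ?_
    gcongr
    exact exp_le_exp.mpr (by nlinarith)
  have hγm : gapLen Em Ep m ≤ 2 * ε * w := by
    refine (Hγ m hm).le.trans ?_
    gcongr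
    exact exp_le_exp.mpr (by nlinarith [znorm_nonneg t])
  have htm' : gapDist Em Ep m t ≤ D * w :=
    (gapDist_comm Em Ep m t).trans_le (gapDist_lt_of_mem_Rset hε hL (Hγ t ht.1) ht).le
  calc a * znorm s ^ (-b) ≤ gapDist Em Ep s t := Hη s t hs.1 ht.1 hst hts
    _ ≤ gapDist Em Ep s m + gapLen Em Ep m + gapDist Em Ep m t :=
      gapDist_le_add_gapLen_add Em Ep s m t
    _ ≤ (2 * D + 2 * ε) * w := by linarith

theorem Rset_norm_jump_general
    {ν : ℕ} (ε κ₀ a b L : ℝ)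
    (hε : 0 < ε) (hκ₀ : 0 < κ₀) (ha : 0 < a) (hb : 0 < b)
    (Em Ep : (Fin ν → ℤ) → ℝ)
    (Hγ : ∀ m : Fin ν → ℤ, m ≠ 0 →
      gapLen Em Ep m < 2 * ε * Real.exp (-(κ₀ * znorm m) / 2))
    (Hη : ∀ m n : Fin ν → ℤ, m ≠ 0 → n ≠ 0 → m ≠ n → znorm n ≤ znorm m →
      a * znorm m ^ (-b) ≤ gapDist Em Ep m n)
    (hL : 0 < L)
    (hLbig : ∀ m : Fin ν → ℤ, m ≠ 0 →
      2 * ε * Real.exp (-(κ₀ * znorm m) / 2) < L * a ^ 4 * znorm m ^ (-(4 * b)))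
    :
    ∃ τ : ℝ, 0 < τ ∧ ∃ β : ℝ, 0 < β ∧
      ∀ m : Fin ν → ℤ, m ≠ 0 →
        ∀ s t u : Fin ν → ℤ,
          s ∈ Rset Em Ep L m → t ∈ Rset Em Ep L m → u ∈ Rset Em Ep L m →
          s ≠ t → t ≠ u → s ≠ u →
          znorm u ≤ znorm t → znorm t ≤ znorm s →
          τ * Real.exp (β * znorm u) ≤ znorm s := by
  set K := 2 * (2 * ε / L) ^ (4⁻¹ : ℝ) + 2 * ε
  have hK : 0 < K := by positivity
  refine ⟨(a / K) ^ b⁻¹, by positivity, κ₀ / (8 * b), by positivity, ?_⟩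
  intro m hm s t u hs ht _ hst _ _ hut hts
  have hjump : a * znorm s ^ (-b) ≤ K * exp (-(κ₀ * znorm t / 8)) := by
    rw [← neg_div]
    exact mul_rpow_neg_le_of_mem_Rset hε.le hκ₀.le ha.le hL Hγ Hη hLbig hm hs ht hst hts
  calc (a / K) ^ b⁻¹ * exp (κ₀ / (8 * b) * znorm u)
      ≤ (a / K) ^ b⁻¹ * exp (κ₀ * znorm t / 8 / b) := by
        rw [show κ₀ * znorm t / 8 / b = κ₀ / (8 * b) * znorm t by ring]
        gcongr
    _ ≤ znorm s := le_of_mul_rpow_neg_le_mul_exp ha hb hK (znorm_pos hs.1) hjump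

/-- There are constants `τ, β > 0` (depending only on `ε, κ₀, a, b, L`) such that for any three
pairwise distinct elements `s, t, u` of `R_m` with `|s| ≥ |t| ≥ |u|`, one has
`|s| ≥ τ exp(β |u|)`. -/
theorem Rset_norm_jump
    {ν : ℕ} (hν : 0 < ν) (ε κ₀ a b c E0 L : ℝ)
    (hε : 0 < ε) (hκ₀ : 0 < κ₀) (hκ₁ : κ₀ ≤ 1) (ha : 0 < a) (hb : 0 < b) (hc : 0 < c)
    (Em Ep : (Fin ν → ℤ) → ℝ)
    (hlt : ∀ m : Fin ν → ℤ, m ≠ 0 → Em m < Ep m)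
    (hE0 : ∀ m : Fin ν → ℤ, m ≠ 0 → E0 < Em m)
    (hdisj : ∀ m n : Fin ν → ℤ, m ≠ 0 → n ≠ 0 → m ≠ n → Ep m < Em n ∨ Ep n < Em m)
    (Hγ : ∀ m : Fin ν → ℤ, m ≠ 0 →
      gapLen Em Ep m < 2 * ε * Real.exp (-(κ₀ * znorm m) / 2))
    (Hη : ∀ m n : Fin ν → ℤ, m ≠ 0 → n ≠ 0 → m ≠ n → znorm n ≤ znorm m →
      a * znorm m ^ (-b) ≤ gapDist Em Ep m n)
    (Hη0low : ∀ m : Fin ν → ℤ, m ≠ 0 → a * znorm m ^ (-b) ≤ Em m - E0)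
    (Hη0 : ∀ m : Fin ν → ℤ, m ≠ 0 → Em m - E0 ≤ c * znorm m ^ (2 : ℕ))
    (hL : 0 < L)
    (hLbig : ∀ m : Fin ν → ℤ, m ≠ 0 →
      2 * ε * Real.exp (-(κ₀ * znorm m) / 2) < L * a ^ 4 * znorm m ^ (-(4 * b)))
    :
    ∃ τ : ℝ, 0 < τ ∧ ∃ β : ℝ, 0 < β ∧
      ∀ m : Fin ν → ℤ, m ≠ 0 →
        ∀ s t u : Fin ν → ℤ,
          s ∈ Rset Em Ep L m → t ∈ Rset Em Ep L m → u ∈ Rset Em Ep L m →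
          s ≠ t → t ≠ u → s ≠ u →
          znorm u ≤ znorm t → znorm t ≤ znorm s →
          τ * Real.exp (β * znorm u) ≤ znorm s :=
  Rset_norm_jump_general ε κ₀ a b L hε hκ₀ ha hb Em Ep Hγ Hη hL hLbig
end
end
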